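/- For any X ∈ L(H_n ⊗ H_m) and h ≤ k ≤ m: ‖X‖_{S(h)} ≤ ‖X‖_{S(k)} ≤ (k/h) · ‖X‖_{S(h)}. -/

import Mathlib

/-!
Write a vector of Schmidt rank at most `k` as `∑_{j < k} e_j ⊗ c_j` with the `e_j` pairwise
orthogonal (Gram–Schmidt), so that the `k` summands are pairwise orthogonal. Averaging the `k`
cyclic windows of `h` consecutive summands writes it as a sum of `k` vectors of Schmidt rank at
most `h`; since every summand lies in exactly `h` windows, Pythagoras and Cauchy–Schwarz bound
the sum of their norms by `√(k/h)` times its norm. Expanding `⟨w|X|v⟩` over such decompositions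
of `v` and `w` gives the factor `k/h`.
-/

noncomputable section
open scoped BigOperators

/-- Inner product (conjugate-linear in the first argument). -/
def ip {ι : Type*} [Fintype ι] (w v : ι → ℂ) : ℂ := ∑ p, star (w p) * v p

/-- Euclidean norm. -/
def nrm {ι : Type*} [Fintype ι] (v : ι → ℂ) : ℝ := Real.sqrt (ip v v).re

/-- Elementary tensor (product vector). -/
def prodVec {n m : ℕ} (a : Fin n → ℂ) (b : Fin m → ℂ) : Fin n × Fin m → ℂ :=
  fun p => a p.1 * b p.2

/-- Schmidt rank at most `k`: `v` is a sum of `k` product vectors. -/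
def SRle {n m : ℕ} (k : ℕ) (v : Fin n × Fin m → ℂ) : Prop :=
  ∃ (a : Fin k → Fin n → ℂ) (b : Fin k → Fin m → ℂ), v = ∑ i, prodVec (a i) (b i)

/-- The `k`-th vector norm. -/
def vecNorm {n m : ℕ} (k : ℕ) (v : Fin n × Fin m → ℂ) : ℝ :=
  sSup {r | ∃ w, nrm w = 1 ∧ SRle k w ∧ r = ‖ip w v‖}

/-- The `k`-th operator norm. -/
def opNorm {n m : ℕ} (k : ℕ) (X : Matrix (Fin n × Fin m) (Fin n × Fin m) ℂ) : ℝ :=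
  sSup {r | ∃ v w, nrm v = 1 ∧ nrm w = 1 ∧ SRle k v ∧ SRle k w ∧
    r = ‖ip w (X.mulVec v)‖}

/-- Rank-one operator `|w⟩⟨v|`. -/
def outer {ι : Type*} (w v : ι → ℂ) : Matrix ι ι ℂ := Matrix.of fun p q => w p * star (v q)

/-- `k`-block positivity. -/
def BlockPos {n m : ℕ} (k : ℕ) (Y : Matrix (Fin n × Fin m) (Fin n × Fin m) ℂ) : Prop :=
  ∀ v : Fin n × Fin m → ℂ, nrm v = 1 → SRle k v → 0 ≤ (ip v (Y.mulVec v)).re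

/-- Schmidt number at most `k`. -/
def SNle {n m : ℕ} (k : ℕ) (ρ : Matrix (Fin n × Fin m) (Fin n × Fin m) ℂ) : Prop :=
  ∃ (N : ℕ) (p : Fin N → ℝ) (v : Fin N → Fin n × Fin m → ℂ),
    (∀ i, 0 ≤ p i) ∧ (∑ i, p i) = 1 ∧ (∀ i, nrm (v i) = 1) ∧ (∀ i, SRle k (v i)) ∧
    ρ = ∑ i, (p i : ℂ) • outer (v i) (v i)

open scoped InnerProductSpace
open Finset

section Euclidean

variable {ι : Type*} [Fintype ι]

lemma ip_eq_inner (w v : ι → ℂ) : ip w v = ⟪WithLp.toLp 2 w, WithLp.toLp 2 v⟫_ℂ := by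
  simp only [ip, PiLp.inner_apply, RCLike.inner_apply, mul_comm]
  rfl

lemma nrm_eq_norm (v : ι → ℂ) : nrm v = ‖WithLp.toLp 2 v‖ := by
  rw [EuclideanSpace.norm_eq, nrm, ip]
  congr 1
  simp [Complex.re_sum, ← Complex.normSq_eq_conj_mul_self, Complex.sq_norm]

lemma nrm_smul (c : ℂ) (v : ι → ℂ) : nrm (c • v) = ‖c‖ * nrm v := by
  simp only [nrm_eq_norm, WithLp.toLp_smul, norm_smul]

lemma ip_smul_smul (a b : ℂ) (w v : ι → ℂ) :
    ip (b • w) (a • v) = star b * a * ip w v := by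
  simp only [ip_eq_inner, WithLp.toLp_smul, inner_smul_left, inner_smul_right, Complex.star_def]
  ring

lemma nrm_nonneg (v : ι → ℂ) : 0 ≤ nrm v := Real.sqrt_nonneg _

lemma nrm_eq_zero {v : ι → ℂ} : nrm v = 0 ↔ v = 0 := by
  simp [nrm_eq_norm]

end Euclidean

lemma norm_sum_sq_eq_sum_norm_sq_of_pairwise {𝕜 E ι : Type*} [RCLike 𝕜] [NormedAddCommGroup E]
    [InnerProductSpace 𝕜 E] {g : ι → E} (hg : Pairwise fun i j => ⟪g i, g j⟫_𝕜 = 0)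
    (s : Finset ι) : ‖∑ i ∈ s, g i‖ ^ 2 = ∑ i ∈ s, ‖g i‖ ^ 2 := by
  classical
  induction s using Finset.induction_on with
  | empty => simp
  | insert a s ha ih =>
    have hortho : ⟪g a, ∑ i ∈ s, g i⟫_𝕜 = 0 := by
      rw [inner_sum]
      exact sum_eq_zero fun i hi => hg (ne_of_mem_of_not_mem hi ha).symm
    rw [sum_insert ha, sum_insert ha, ← ih, sq, sq, sq,
      norm_add_sq_eq_norm_sq_add_norm_sq_of_inner_eq_zero _ _ hortho]

section WindowAverage

variable {G : Type*} [AddGroup G] [Fintype G]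

lemma sum_comp_add_right {M : Type*} [AddCommMonoid M] (f : G → M) (s : G) :
    ∑ r, f (r + s) = ∑ r, f r :=
  Equiv.sum_comp (Equiv.addRight s) f

variable {𝕜 E : Type*} [RCLike 𝕜] [NormedAddCommGroup E] [InnerProductSpace 𝕜 E]

variable (𝕜) in
def windowAvg (g : G → E) (W : Finset G) (r : G) : E := (#W : 𝕜)⁻¹ • ∑ s ∈ W, g (r + s)

lemma sum_windowAvg (g : G → E) {W : Finset G} (hW : W.Nonempty) :
    ∑ r, windowAvg 𝕜 g W r = ∑ j, g j := by
  have hW0 : (#W : 𝕜) ≠ 0 := Nat.cast_ne_zero.2 hW.card_pos.ne'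
  simp only [windowAvg, ← smul_sum]
  rw [sum_comm, sum_congr rfl fun s _ => sum_comp_add_right g s, sum_const,
    ← Nat.cast_smul_eq_nsmul 𝕜, smul_smul, inv_mul_cancel₀ hW0, one_smul]

lemma sum_norm_sq_windowAvg {g : G → E} (hg : Pairwise fun i j => ⟪g i, g j⟫_𝕜 = 0)
    (W : Finset G) : ∑ r, ‖windowAvg 𝕜 g W r‖ ^ 2 = (#W : ℝ)⁻¹ * ∑ j, ‖g j‖ ^ 2 := by
  have hnorm : ∀ r, ‖windowAvg 𝕜 g W r‖ ^ 2 = (#W : ℝ)⁻¹ ^ 2 * ∑ s ∈ W, ‖g (r + s)‖ ^ 2 := by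
    intro r
    have hg' : Pairwise fun s t => ⟪g (r + s), g (r + t)⟫_𝕜 = 0 :=
      fun s t hst => hg fun h => hst (add_left_cancel h)
    rw [windowAvg, norm_smul, mul_pow, norm_sum_sq_eq_sum_norm_sq_of_pairwise hg', norm_inv,
      RCLike.norm_natCast]
  simp_rw [hnorm, ← mul_sum]
  rw [sum_comm, sum_congr rfl fun s _ => sum_comp_add_right (fun j => ‖g j‖ ^ 2) s,
    sum_const, nsmul_eq_mul]
  rcases eq_or_ne (#W : ℝ) 0 with h0 | h0
  · simp [h0]
  · field_simp

lemma sq_sum_norm_windowAvg_le {g : G → E} (hg : Pairwise fun i j => ⟪g i, g j⟫_𝕜 = 0)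
    (W : Finset G) :
    (∑ r, ‖windowAvg 𝕜 g W r‖) ^ 2 ≤ Fintype.card G / #W * ‖∑ j, g j‖ ^ 2 :=
  calc (∑ r, ‖windowAvg 𝕜 g W r‖) ^ 2
      ≤ Fintype.card G * ∑ r, ‖windowAvg 𝕜 g W r‖ ^ 2 := sq_sum_le_card_mul_sum_sq
    _ = Fintype.card G / #W * ‖∑ j, g j‖ ^ 2 := by
      rw [sum_norm_sq_windowAvg hg, norm_sum_sq_eq_sum_norm_sq_of_pairwise hg]
      ring

end WindowAverage

section SchmidtRank

variable {n m : ℕ}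

lemma ip_prodVec (a a' : Fin n → ℂ) (b b' : Fin m → ℂ) :
    ip (prodVec a b) (prodVec a' b') = ip a a' * ip b b' := by
  simp only [ip, prodVec, Fintype.sum_prod_type, sum_mul_sum, star_mul']
  exact sum_congr rfl fun i _ => sum_congr rfl fun j _ => by ring

lemma prodVec_sum_smul {ι : Type*} [Fintype ι] (x : ι → ℂ) (e : ι → Fin n → ℂ)
    (b : Fin m → ℂ) : prodVec (∑ j, x j • e j) b = ∑ j, prodVec (e j) (x j • b) := by
  ext p
  simp [prodVec, Finset.sum_apply, Finset.sum_mul, mul_assoc, mul_left_comm]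

lemma SRle.smul {k : ℕ} {v : Fin n × Fin m → ℂ} (c : ℂ) (hv : SRle k v) : SRle k (c • v) := by
  obtain ⟨a, b, rfl⟩ := hv
  refine ⟨fun i => c • a i, b, ?_⟩
  rw [smul_sum]
  refine sum_congr rfl fun i _ => ?_
  ext p
  simp [prodVec, mul_assoc]

lemma SRle.mono {h k : ℕ} (hhk : h ≤ k) {v : Fin n × Fin m → ℂ} (hv : SRle h v) :
    SRle k v := by
  obtain ⟨l, rfl⟩ := Nat.exists_eq_add_of_le hhk
  obtain ⟨a, b, rfl⟩ := hv
  refine ⟨Fin.append a 0, Fin.append b 0, ?_⟩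
  ext p
  simp [Fin.sum_univ_add, prodVec]

lemma SRle.exists_pairwise_orthogonal {k : ℕ} {v : Fin n × Fin m → ℂ} (hv : SRle k v) :
    ∃ (e : Fin k → Fin n → ℂ) (c : Fin k → Fin m → ℂ),
      Pairwise (fun i j => ip (e i) (e j) = 0) ∧ v = ∑ j, prodVec (e j) (c j) := by
  obtain ⟨a, b, rfl⟩ := hv
  set f : Fin k → EuclideanSpace ℂ (Fin n) := fun i => WithLp.toLp 2 (a i)
  set gs := InnerProductSpace.gramSchmidt ℂ f
  have hspan : ∀ i, f i ∈ Submodule.span ℂ (Set.range gs) := fun i => by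
    rw [InnerProductSpace.span_gramSchmidt]
    exact Submodule.subset_span ⟨i, rfl⟩
  choose x hx using fun i => (Submodule.mem_span_range_iff_exists_fun ℂ).1 (hspan i)
  refine ⟨fun j => (gs j).ofLp, fun j => ∑ i, x i j • b i, fun i j hij => ?_, ?_⟩
  · show ip _ _ = 0
    rw [ip_eq_inner, WithLp.toLp_ofLp, WithLp.toLp_ofLp]
    exact InnerProductSpace.gramSchmidt_orthogonal ℂ f hij
  · have ha : ∀ i, a i = ∑ j, x i j • (gs j).ofLp := fun i => by
      simpa [f] using (congrArg WithLp.ofLp (hx i)).symm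
    simp_rw [ha, prodVec_sum_smul]
    rw [sum_comm]
    refine sum_congr rfl fun j _ => ?_
    ext p
    simp [prodVec, Finset.sum_apply, Finset.mul_sum]

lemma SRle.exists_split_sum_nrm_sq_le {h k : ℕ} (hh : 1 ≤ h) (hhk : h ≤ k)
    {v : Fin n × Fin m → ℂ} (hv : SRle k v) :
    ∃ u : Fin k → Fin n × Fin m → ℂ, (∀ r, SRle h (u r)) ∧ ∑ r, u r = v ∧
      (∑ r, nrm (u r)) ^ 2 ≤ k / h * nrm v ^ 2 := by
  have : NeZero k := ⟨by omega⟩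
  obtain ⟨e, c, he, rfl⟩ := hv.exists_pairwise_orthogonal
  set g : Fin k → EuclideanSpace ℂ (Fin n × Fin m) :=
    fun j => WithLp.toLp 2 (prodVec (e j) (c j))
  have hg : Pairwise fun i j => ⟪g i, g j⟫_ℂ = 0 := fun i j hij => by
    simp [g, ← ip_eq_inner, ip_prodVec, he hij]
  set W : Finset (Fin k) := univ.map (Fin.castLEEmb hhk)
  have hW : #W = h := by simp [W]
  have hsum : ∑ j, g j = WithLp.toLp 2 (∑ j, prodVec (e j) (c j)) := by simp [g]
  refine ⟨fun r => (windowAvg ℂ g W r).ofLp, fun r => ?_, ?_, ?_⟩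
  · have hwin : (windowAvg ℂ g W r).ofLp = (h : ℂ)⁻¹ •
        ∑ s : Fin h, prodVec (e (r + Fin.castLE hhk s)) (c (r + Fin.castLE hhk s)) := by
      simp [windowAvg, W, g, hW, sum_map]
    dsimp only
    rw [hwin]
    exact SRle.smul _ ⟨_, _, rfl⟩
  · rw [← WithLp.ofLp_sum, sum_windowAvg g (card_pos.1 (by omega)), hsum]
  · simp only [nrm_eq_norm, WithLp.toLp_ofLp, ← hsum]
    simpa [hW] using sq_sum_norm_windowAvg_le hg W

end SchmidtRank

section OpNorm

open scoped Matrix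

variable {n m : ℕ} (X : Matrix (Fin n × Fin m) (Fin n × Fin m) ℂ)

open scoped Matrix.Norms.L2Operator in
lemma bddAbove_opNorm_set (k : ℕ) :
    BddAbove {r | ∃ v w, nrm v = 1 ∧ nrm w = 1 ∧ SRle k v ∧ SRle k w ∧
      r = ‖ip w (X.mulVec v)‖} := by
  refine ⟨‖X‖, ?_⟩
  rintro _ ⟨v, w, hv, hw, -, -, rfl⟩
  rw [nrm_eq_norm] at hv hw
  calc ‖ip w (X *ᵥ v)‖ ≤ ‖WithLp.toLp 2 w‖ * ‖WithLp.toLp 2 (X *ᵥ v)‖ := by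
        rw [ip_eq_inner]
        exact norm_inner_le_norm _ _
    _ ≤ 1 * (‖X‖ * 1) := by
        rw [hw, ← hv]
        gcongr
        exact X.l2_opNorm_mulVec _
    _ = ‖X‖ := by ring

lemma norm_ip_mulVec_le_opNorm {k : ℕ} {v w : Fin n × Fin m → ℂ} (hv : nrm v = 1)
    (hw : nrm w = 1) (hsv : SRle k v) (hsw : SRle k w) : ‖ip w (X *ᵥ v)‖ ≤ opNorm k X :=
  le_csSup (bddAbove_opNorm_set X k) ⟨v, w, hv, hw, hsv, hsw, rfl⟩

lemma norm_ip_mulVec_le_opNorm_mul {k : ℕ} {v w : Fin n × Fin m → ℂ} (hsv : SRle k v)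
    (hsw : SRle k w) : ‖ip w (X *ᵥ v)‖ ≤ opNorm k X * nrm w * nrm v := by
  rcases eq_or_ne (nrm v) 0 with hv0 | hv0
  · simp [nrm_eq_zero.1 hv0, ip, nrm_eq_norm]
  rcases eq_or_ne (nrm w) 0 with hw0 | hw0
  · simp [nrm_eq_zero.1 hw0, ip, nrm_eq_norm]
  have hnorm : ∀ u : Fin n × Fin m → ℂ, ‖(((nrm u)⁻¹ : ℝ) : ℂ)‖ = (nrm u)⁻¹ := fun u => by
    simp [abs_of_nonneg (nrm_nonneg u)]
  have hunit : ∀ {u : Fin n × Fin m → ℂ}, nrm u ≠ 0 → nrm ((((nrm u)⁻¹ : ℝ) : ℂ) • u) = 1 :=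
    fun hu => by rw [nrm_smul, hnorm, inv_mul_cancel₀ hu]
  have key := norm_ip_mulVec_le_opNorm X (hunit hv0) (hunit hw0) (hsv.smul _) (hsw.smul _)
  rw [Matrix.mulVec_smul, ip_smul_smul, norm_mul, norm_mul, norm_star, hnorm, hnorm] at key
  calc ‖ip w (X *ᵥ v)‖ = nrm w * nrm v * ((nrm w)⁻¹ * (nrm v)⁻¹ * ‖ip w (X *ᵥ v)‖) := by
        field_simp
    _ ≤ nrm w * nrm v * opNorm k X := by
        have := nrm_nonneg v
        have := nrm_nonneg w
        gcongr
    _ = opNorm k X * nrm w * nrm v := by ring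

lemma opNorm_nonneg (k : ℕ) : 0 ≤ opNorm k X :=
  Real.sSup_nonneg <| by
    rintro _ ⟨v, w, -, -, -, -, rfl⟩
    exact norm_nonneg _

lemma opNorm_mono {h k : ℕ} (hhk : h ≤ k) : opNorm h X ≤ opNorm k X :=
  Real.sSup_le (fun _ ⟨_, _, hv, hw, hsv, hsw, hr⟩ =>
    hr ▸ norm_ip_mulVec_le_opNorm X hv hw (hsv.mono hhk) (hsw.mono hhk)) (opNorm_nonneg X k)

lemma opNorm_le_div_mul_opNorm {h k : ℕ} (hh : 1 ≤ h) (hhk : h ≤ k) :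
    opNorm k X ≤ k / h * opNorm h X := by
  refine Real.sSup_le ?_ (by have := opNorm_nonneg X h; positivity)
  rintro _ ⟨v, w, hv, hw, hsv, hsw, rfl⟩
  obtain ⟨u, hu, rfl, hsq⟩ := hsv.exists_split_sum_nrm_sq_le hh hhk
  obtain ⟨u', hu', rfl, hsq'⟩ := hsw.exists_split_sum_nrm_sq_le hh hhk
  rw [hv, one_pow, mul_one] at hsq
  rw [hw, one_pow, mul_one] at hsq'
  have hsum : (∑ j, nrm (u' j)) * (∑ i, nrm (u i)) ≤ k / h := by
    have hA : 0 ≤ ∑ j, nrm (u' j) := sum_nonneg fun j _ => nrm_nonneg _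
    have hB : 0 ≤ ∑ i, nrm (u i) := sum_nonneg fun i _ => nrm_nonneg _
    nlinarith [sq_nonneg (∑ j, nrm (u' j) - ∑ i, nrm (u i))]
  calc ‖ip (∑ j, u' j) (X *ᵥ ∑ i, u i)‖ = ‖∑ j, ∑ i, ip (u' j) (X *ᵥ u i)‖ := by
        simp only [ip_eq_inner, Matrix.mulVec_sum, WithLp.toLp_sum, sum_inner, inner_sum]
        rw [sum_comm]
    _ ≤ ∑ j, ∑ i, ‖ip (u' j) (X *ᵥ u i)‖ :=
        (norm_sum_le _ _).trans (sum_le_sum fun j _ => norm_sum_le _ _)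
    _ ≤ ∑ j, ∑ i, opNorm h X * nrm (u' j) * nrm (u i) :=
        sum_le_sum fun j _ => sum_le_sum fun i _ => norm_ip_mulVec_le_opNorm_mul X (hu i) (hu' j)
    _ = opNorm h X * ((∑ j, nrm (u' j)) * (∑ i, nrm (u i))) := by
        rw [sum_mul_sum, mul_sum]
        simp only [mul_sum, mul_assoc]
    _ ≤ opNorm h X * (k / h) := by
        gcongr
        exact opNorm_nonneg X h
    _ = k / h * opNorm h X := mul_comm _ _

end OpNorm

theorem stmt10_general {n m h k : ℕ} (hh1 : 1 ≤ h) (hhk : h ≤ k)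
    (X : Matrix (Fin n × Fin m) (Fin n × Fin m) ℂ) :
    opNorm h X ≤ opNorm k X ∧ opNorm k X ≤ ((k : ℝ) / h) * opNorm h X :=
  ⟨opNorm_mono X hhk, opNorm_le_div_mul_opNorm X hh1 hhk⟩

/-- equivalence of the k-th operator norms. -/
theorem stmt10 {n m h k : ℕ} (hmn : m ≤ n) (hh1 : 1 ≤ h) (hhk : h ≤ k) (hkm : k ≤ m)
    (X : Matrix (Fin n × Fin m) (Fin n × Fin m) ℂ) :
    opNorm h X ≤ opNorm k X ∧ opNorm k X ≤ ((k : ℝ) / h) * opNorm h X :=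
  stmt10_general hh1 hhk X
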